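/- Let q be any prime power and F = GF(q). Let W be the 4-dimensional subspace of quadratic forms over F spanned by X0X1, X0X2−X1^2, X1X2 and X2^2 (the web of conics associated with the line-orbit o_9). Then among the conics of W there is exactly 1 double line, exactly q^2+q pairs of real lines, no pairs of imaginary lines, and exactly q^3 nonsingular conics. -/

import Mathlib

open Matrix

namespace Conics

/-- Coefficient vector (a0,...,a5) of the product of two linear forms
`(b0*X0+b1*X1+b2*X2)*(c0*X0+c1*X1+c2*X2)`, where the quadratic form with
coefficient vector `a` is `a0*X0^2 + a1*X0*X1 + a2*X0*X2 + a3*X1^2 + a4*X1*X2 + a5*X2^2`. -/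
def mulLin {F : Type} [Field F] (b c : Fin 3 → F) : Fin 6 → F :=
  ![b 0 * c 0, b 0 * c 1 + b 1 * c 0, b 0 * c 2 + b 2 * c 0,
    b 1 * c 1, b 1 * c 2 + b 2 * c 1, b 2 * c 2]

/-- The discriminant of the quadratic form with coefficient vector `a`. -/
def disc {F : Type} [Field F] (a : Fin 6 → F) : F :=
  4 * a 0 * a 3 * a 5 + a 1 * a 2 * a 4 - a 0 * a 4 ^ 2 - a 3 * a 2 ^ 2 - a 5 * a 1 ^ 2

/-- `f_a` is a double line: `f_a = c * l^2` for a nonzero scalar `c` and nonzero linear form `l`. -/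
def IsDoubleLine {F : Type} [Field F] (a : Fin 6 → F) : Prop :=
  ∃ (c : F) (l : Fin 3 → F), c ≠ 0 ∧ l ≠ 0 ∧ a = c • mulLin l l

/-- `f_a` is a pair of (distinct) real lines: `f_a = l1 * l2` with neither linear form a scalar
multiple of the other. -/
def IsRealPair {F : Type} [Field F] (a : Fin 6 → F) : Prop :=
  ∃ l1 l2 : Fin 3 → F, (¬ ∃ t : F, l2 = t • l1) ∧ (¬ ∃ t : F, l1 = t • l2) ∧ a = mulLin l1 l2

/-- `f_a` is a pair of conjugate imaginary lines: singular, but not a product of two linear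
forms over `F`. -/
def IsImagPair {F : Type} [Field F] (a : Fin 6 → F) : Prop :=
  disc a = 0 ∧ ¬ ∃ l1 l2 : Fin 3 → F, a = mulLin l1 l2

/-- `f_a` is a nonsingular conic. -/
def IsNonsingular {F : Type} [Field F] (a : Fin 6 → F) : Prop :=
  disc a ≠ 0

/-- The number of conics of a given type `T` in a linear system `W` (a subspace of the space of
quadratic forms, identified with `F^6`): the number of 1-dimensional subspaces `⟨a⟩` of `W`,
`a ≠ 0`, such that `f_a` has type `T`. -/
noncomputable def numConics {F : Type} [Field F] (W : Submodule F (Fin 6 → F))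
    (T : (Fin 6 → F) → Prop) : ℕ :=
  Set.ncard {P : Submodule F (Fin 6 → F) |
    ∃ a : Fin 6 → F, a ≠ 0 ∧ a ∈ W ∧ T a ∧ P = Submodule.span F {a}}

/-- The symmetric 3×3 matrix associated with a point `y` of `PG(5,q)`. -/
def M {F : Type} [Field F] (y : Fin 6 → F) : Matrix (Fin 3) (Fin 3) F :=
  !![y 0, y 1, y 2; y 1, y 3, y 4; y 2, y 4, y 5]

/-- The pairing `B(a,y) = a0*y0 + ... + a5*y5`. -/
def Bform {F : Type} [Field F] (a y : Fin 6 → F) : F :=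
  a 0 * y 0 + a 1 * y 1 + a 2 * y 2 + a 3 * y 3 + a 4 * y 4 + a 5 * y 5

/-- The squab of conics associated with a (nonzero) point `y`: the hyperplane
`{a : B(a,y) = 0}` of the space of quadratic forms. -/
def squab {F : Type} [Field F] (y : Fin 6 → F) : Submodule F (Fin 6 → F) where
  carrier := {a | Bform a y = 0}
  add_mem' := by
    intro a b ha hb
    simp only [Set.mem_setOf_eq, Bform, Pi.add_apply] at *
    linear_combination ha + hb
  zero_mem' := by simp [Bform]
  smul_mem' := by
    intro c a ha
    simp only [Set.mem_setOf_eq, Bform, Pi.smul_apply, smul_eq_mul] at *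
    linear_combination c * ha


/-!
On the web, write `webVec x₁ x₂ x₄ x₅` for `x₁·X0X1 + x₂·(X0X2 − X1²) + x₄·X1X2 + x₅·X2²`; its
discriminant is `x₁x₂x₄ + x₂³ − x₅x₁²`. Every point of `PG(W)` has a unique representative whose
first nonzero coordinate among `x₁, x₂, x₄, x₅` is `1`. Every singular member of `W` factors over
`F` by an explicit formula, and the two factors are proportional only for `X2²`, the one double line
of the web. Hence the discriminant vanishes exactly on `X2²` and on `q² + q` real pairs among the
`q³ + q² + q + 1` normal forms, and the remaining `q³` are nonsingular.
-/

section QuadraticForms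

variable {F : Type} [Field F]

lemma disc_smul (c : F) (a : Fin 6 → F) : disc (c • a) = c ^ 3 * disc a := by
  simp only [disc, Pi.smul_apply, smul_eq_mul]; ring

lemma disc_mulLin (l₁ l₂ : Fin 3 → F) : disc (mulLin l₁ l₂) = 0 := by
  simp only [disc, mulLin, cons_val]; ring

lemma mulLin_comm (l₁ l₂ : Fin 3 → F) : mulLin l₁ l₂ = mulLin l₂ l₁ := by
  unfold mulLin; ring_nf

lemma mulLin_smul_left (c : F) (l₁ l₂ : Fin 3 → F) : mulLin (c • l₁) l₂ = c • mulLin l₁ l₂ := by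
  simp only [mulLin, Pi.smul_apply, smul_eq_mul, smul_cons, smul_empty]; ring_nf

variable {c : F} {a : Fin 6 → F}

lemma IsDoubleLine.smul (hc : c ≠ 0) (h : IsDoubleLine a) : IsDoubleLine (c • a) := by
  obtain ⟨d, l, hd, hl, rfl⟩ := h
  exact ⟨c * d, l, mul_ne_zero hc hd, hl, (mul_smul c d _).symm⟩

lemma IsRealPair.smul (hc : c ≠ 0) (h : IsRealPair a) : IsRealPair (c • a) := by
  obtain ⟨l₁, l₂, h₂₁, h₁₂, rfl⟩ := h
  refine ⟨c • l₁, l₂, ?_, ?_, (mulLin_smul_left c l₁ l₂).symm⟩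
  · rintro ⟨t, ht⟩
    exact h₂₁ ⟨t * c, by rw [ht, smul_smul]⟩
  · rintro ⟨t, ht⟩
    exact h₁₂ ⟨c⁻¹ * t, by rw [← smul_smul, ← ht, inv_smul_smul₀ hc]⟩

lemma IsImagPair.smul (hc : c ≠ 0) (h : IsImagPair a) : IsImagPair (c • a) := by
  refine ⟨by rw [disc_smul, h.1, mul_zero], ?_⟩
  rintro ⟨l₁, l₂, hl⟩
  refine h.2 ⟨c⁻¹ • l₁, l₂, ?_⟩
  rw [mulLin_smul_left, ← hl, inv_smul_smul₀ hc]

lemma IsNonsingular.smul (hc : c ≠ 0) (h : IsNonsingular a) : IsNonsingular (c • a) := by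
  rw [IsNonsingular, disc_smul]
  exact mul_ne_zero (pow_ne_zero 3 hc) h

end QuadraticForms

lemma numConics_eq_card {F : Type} [Field F] {ι : Type*} (W : Submodule F (Fin 6 → F))
    (T : (Fin 6 → F) → Prop) (v : ι → Fin 6 → F) (hv₀ : ∀ i, v i ≠ 0) (hvW : ∀ i, v i ∈ W)
    (hv_inj : ∀ i j (c : F), c • v i = v j → i = j)
    (hv_cover : ∀ a ∈ W, ∃ i, ∃ c : F, c • v i = a)
    (hT : ∀ c : F, c ≠ 0 → ∀ a, T a → T (c • a)) :
    numConics W T = Nat.card {i // T (v i)} := by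
  have hspan_inj : Function.Injective fun i : {i // T (v i)} ↦ Submodule.span F {v i} := by
    intro i j hij
    obtain ⟨u, hu⟩ := Submodule.span_singleton_eq_span_singleton.mp hij
    exact Subtype.ext (hv_inj i j u hu)
  rw [numConics, ← Set.ncard_range_of_injective hspan_inj]
  congr 1
  ext P
  constructor
  · rintro ⟨a, ha₀, haW, hTa, rfl⟩
    obtain ⟨i, c, rfl⟩ := hv_cover a haW
    have hc : c ≠ 0 := by rintro rfl; exact ha₀ (zero_smul F _)
    refine ⟨⟨i, ?_⟩, (Submodule.span_singleton_smul_eq hc.isUnit _).symm⟩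
    simpa [inv_smul_smul₀ hc] using hT c⁻¹ (inv_ne_zero hc) _ hTa
  · rintro ⟨i, rfl⟩
    exact ⟨v i, hv₀ i, hvW i, i.2, rfl⟩

lemma eq_zero_of_add_eq_zero_of_mul_eq_zero {R : Type*} [CommRing R] [NoZeroDivisors R]
    {u v : R} (hsum : u + v = 0) (hprod : u * v = 0) : u = 0 :=
  pow_eq_zero_iff two_ne_zero |>.mp (by linear_combination u * hsum - hprod)

section Web

variable {F : Type} [Field F] {x₁ x₂ x₄ x₅ : F}

def webVec (x₁ x₂ x₄ x₅ : F) : Fin 6 → F := ![0, x₁, x₂, -x₂, x₄, x₅]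

variable (F) in
def web : Submodule F (Fin 6 → F) :=
  Submodule.span F
    {![0, 1, 0, 0, 0, 0], ![0, 0, 1, -1, 0, 0], ![0, 0, 0, 0, 1, 0], ![0, 0, 0, 0, 0, 1]}

lemma mem_web_iff {a : Fin 6 → F} : a ∈ web F ↔ ∃ x₁ x₂ x₄ x₅ : F, a = webVec x₁ x₂ x₄ x₅ := by
  simp only [web, Submodule.mem_span_insert, Submodule.mem_span_singleton]
  constructor
  · rintro ⟨x₁, _, ⟨x₂, _, ⟨x₄, _, ⟨x₅, rfl⟩, rfl⟩, rfl⟩, rfl⟩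
    exact ⟨x₁, x₂, x₄, x₅, by ext i; fin_cases i <;> simp [webVec]⟩
  · rintro ⟨x₁, x₂, x₄, x₅, rfl⟩
    exact ⟨x₁, _, ⟨x₂, _, ⟨x₄, _, ⟨x₅, rfl⟩, rfl⟩, rfl⟩, by ext i; fin_cases i <;> simp [webVec]⟩

lemma disc_webVec (x₁ x₂ x₄ x₅ : F) :
    disc (webVec x₁ x₂ x₄ x₅) = x₁ * x₂ * x₄ + x₂ ^ 3 - x₅ * x₁ ^ 2 := by
  simp only [disc, webVec, cons_val]; ring

lemma webVec_eq_smul_mulLin_self {t : F} {l : Fin 3 → F}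
    (h : webVec x₁ x₂ x₄ x₅ = t • mulLin l l) : x₁ = 0 ∧ x₂ = 0 ∧ x₄ = 0 := by
  have e₀ : 0 = t * (l 0 * l 0) := congrFun h 0
  have e₁ : x₁ = t * (l 0 * l 1 + l 1 * l 0) := congrFun h 1
  have e₂ : x₂ = t * (l 0 * l 2 + l 2 * l 0) := congrFun h 2
  have e₃ : -x₂ = t * (l 1 * l 1) := congrFun h 3
  have e₄ : x₄ = t * (l 1 * l 2 + l 2 * l 1) := congrFun h 4
  have ht₀ : t * l 0 = 0 := pow_eq_zero_iff two_ne_zero |>.mp (by linear_combination -t * e₀)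
  have hx₂ : x₂ = 0 := by linear_combination e₂ + 2 * l 2 * ht₀
  have ht₁ : t * l 1 = 0 :=
    pow_eq_zero_iff two_ne_zero |>.mp (by linear_combination -t * e₃ - t * hx₂)
  exact ⟨by linear_combination e₁ + 2 * l 1 * ht₀, hx₂, by linear_combination e₄ + 2 * l 2 * ht₁⟩

lemma exists_mulLin_of_disc_eq_zero (h : disc (webVec x₁ x₂ x₄ x₅) = 0) :
    ∃ l₁ l₂ : Fin 3 → F, webVec x₁ x₂ x₄ x₅ = mulLin l₁ l₂ := by
  rw [disc_webVec] at h
  by_cases hx₁ : x₁ = 0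
  · have hx₂ : x₂ = 0 := pow_eq_zero_iff three_ne_zero |>.mp (by simpa [hx₁] using h)
    exact ⟨![0, x₄, x₅], ![0, 0, 1], by ext i; fin_cases i <;> simp [webVec, mulLin, hx₁, hx₂]⟩
  · refine ⟨![x₁, -x₂, x₄ + x₂ ^ 2 / x₁], ![0, 1, x₂ / x₁], ?_⟩
    simp only [webVec, mulLin, cons_val, vecCons_inj]
    refine ⟨by ring, by ring, ?_, by ring, ?_, ?_, trivial⟩ <;> field_simp
    · ring
    · ring
    · linear_combination -h

lemma not_isImagPair_webVec : ¬ IsImagPair (webVec x₁ x₂ x₄ x₅) :=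
  fun h ↦ h.2 (exists_mulLin_of_disc_eq_zero h.1)

lemma isRealPair_webVec (hdisc : disc (webVec x₁ x₂ x₄ x₅) = 0)
    (hx : ¬ (x₁ = 0 ∧ x₂ = 0 ∧ x₄ = 0)) : IsRealPair (webVec x₁ x₂ x₄ x₅) := by
  obtain ⟨l₁, l₂, h⟩ := exists_mulLin_of_disc_eq_zero hdisc
  refine ⟨l₁, l₂, ?_, ?_, h⟩
  · rintro ⟨t, rfl⟩
    exact hx (webVec_eq_smul_mulLin_self (by rw [h, mulLin_comm, mulLin_smul_left]))
  · rintro ⟨t, rfl⟩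
    exact hx (webVec_eq_smul_mulLin_self (by rw [h, mulLin_smul_left]))

lemma not_isRealPair_webVec_sq (hx₅ : x₅ ≠ 0) : ¬ IsRealPair (webVec 0 0 0 x₅) := by
  rintro ⟨l₁, l₂, hprop, -, h⟩
  have e₀ : 0 = l₁ 0 * l₂ 0 := congrFun h 0
  have e₂ : 0 = l₁ 0 * l₂ 2 + l₁ 2 * l₂ 0 := congrFun h 2
  have e₃ : -0 = l₁ 1 * l₂ 1 := congrFun h 3
  have e₄ : 0 = l₁ 1 * l₂ 2 + l₁ 2 * l₂ 1 := congrFun h 4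
  have e₅ : x₅ = l₁ 2 * l₂ 2 := congrFun h 5
  have hl₁ : l₁ 2 ≠ 0 := fun h0 ↦ hx₅ (by rw [e₅, h0, zero_mul])
  -- `l₁ 0 * l₂ 2` and `l₁ 2 * l₂ 0` have zero sum and zero product, so both vanish;
  -- likewise with index `1` in place of `0`.
  have h₀ : l₁ 2 * l₂ 0 = 0 := eq_zero_of_add_eq_zero_of_mul_eq_zero (v := l₁ 0 * l₂ 2)
    (by linear_combination -e₂) (by linear_combination -(l₁ 2 * l₂ 2) * e₀)
  have h₀' : l₁ 0 * l₂ 2 = 0 := by linear_combination -e₂ - h₀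
  have h₁ : l₁ 2 * l₂ 1 = 0 := eq_zero_of_add_eq_zero_of_mul_eq_zero (v := l₁ 1 * l₂ 2)
    (by linear_combination -e₄) (by linear_combination -(l₁ 2 * l₂ 2) * e₃)
  have h₁' : l₁ 1 * l₂ 2 = 0 := by linear_combination -e₄ - h₁
  refine hprop ⟨l₂ 2 / l₁ 2, funext fun i ↦ ?_⟩
  rw [Pi.smul_apply, smul_eq_mul, div_mul_eq_mul_div, eq_div_iff hl₁]
  match i with
  | 0 => linear_combination h₀ - h₀'
  | 1 => linear_combination h₁ - h₁'
  | 2 => ring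

end Web

/-- Normal forms of the points of `PG(web F)`: the first nonzero coordinate among
`x₁, x₂, x₄, x₅` is `1`. -/
abbrev WebPoint (F : Type) := (F × F × F) ⊕ (F × F) ⊕ F ⊕ Unit

namespace WebPoint

variable {F : Type} [Field F]

def vec : WebPoint F → Fin 6 → F
  | .inl (p₂, p₄, p₅) => webVec 1 p₂ p₄ p₅
  | .inr (.inl (p₄, p₅)) => webVec 0 1 p₄ p₅
  | .inr (.inr (.inl p₅)) => webVec 0 0 1 p₅
  | .inr (.inr (.inr ())) => webVec 0 0 0 1

def doubleLine : WebPoint F := .inr (.inr (.inr ()))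

open Classical in
noncomputable def ofVec (a : Fin 6 → F) : WebPoint F :=
  if a 1 = 0 then
    if a 2 = 0 then
      if a 4 = 0 then doubleLine else .inr (.inr (.inl (a 5 / a 4)))
    else .inr (.inl (a 4 / a 2, a 5 / a 2))
  else .inl (a 2 / a 1, a 4 / a 1, a 5 / a 1)

lemma ofVec_vec (r : WebPoint F) : ofVec (vec r) = r := by
  rcases r with ⟨p₂, p₄, p₅⟩ | ⟨p₄, p₅⟩ | p₅ | ⟨⟩ <;> simp [ofVec, vec, webVec, doubleLine]

lemma ofVec_smul {c : F} (hc : c ≠ 0) (a : Fin 6 → F) : ofVec (c • a) = ofVec a := by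
  simp only [ofVec, Pi.smul_apply, smul_eq_mul, mul_div_mul_left _ _ hc]
  split_ifs <;> simp_all

lemma vec_ne_zero (r : WebPoint F) : vec r ≠ 0 := by
  rcases r with ⟨p₂, p₄, p₅⟩ | ⟨p₄, p₅⟩ | p₅ | ⟨⟩ <;> intro h
  · simpa [vec, webVec] using congrFun h 1
  · simpa [vec, webVec] using congrFun h 2
  · simpa [vec, webVec] using congrFun h 4
  · simpa [vec, webVec] using congrFun h 5

lemma exists_vec_eq_webVec (r : WebPoint F) : ∃ x₁ x₂ x₄ x₅ : F, vec r = webVec x₁ x₂ x₄ x₅ := by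
  rcases r with ⟨p₂, p₄, p₅⟩ | ⟨p₄, p₅⟩ | p₅ | ⟨⟩ <;> exact ⟨_, _, _, _, rfl⟩

lemma exists_smul_vec_ofVec (x₁ x₂ x₄ x₅ : F) :
    ∃ c : F, c • vec (ofVec (webVec x₁ x₂ x₄ x₅)) = webVec x₁ x₂ x₄ x₅ := by
  by_cases h₁ : x₁ = 0 <;> by_cases h₂ : x₂ = 0 <;> by_cases h₄ : x₄ = 0 <;>
    simp [ofVec, vec, webVec, doubleLine, h₁, h₂, h₄, mul_div_cancel₀]

lemma vec_mem_web (r : WebPoint F) : vec r ∈ web F :=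
  mem_web_iff.mpr (exists_vec_eq_webVec r)

lemma exists_smul_vec_of_mem_web {a : Fin 6 → F} (ha : a ∈ web F) :
    ∃ r : WebPoint F, ∃ c : F, c • vec r = a := by
  obtain ⟨x₁, x₂, x₄, x₅, rfl⟩ := mem_web_iff.mp ha
  exact ⟨_, exists_smul_vec_ofVec x₁ x₂ x₄ x₅⟩

lemma eq_of_smul_vec_eq_vec {r s : WebPoint F} {c : F} (h : c • vec r = vec s) : r = s := by
  have hc : c ≠ 0 := by rintro rfl; exact vec_ne_zero s (by rw [← h, zero_smul])
  rw [← ofVec_vec r, ← ofVec_smul hc, h, ofVec_vec]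

lemma isDoubleLine_vec_iff (r : WebPoint F) : IsDoubleLine (vec r) ↔ r = doubleLine := by
  constructor
  · rintro ⟨t, l, -, -, h⟩
    rcases r with ⟨p₂, p₄, p₅⟩ | ⟨p₄, p₅⟩ | p₅ | u
    case inr.inr.inr => rfl
    all_goals simpa using webVec_eq_smul_mulLin_self h
  · rintro rfl
    refine ⟨1, ![0, 0, 1], one_ne_zero, fun h ↦ by simpa using congrFun h 2, ?_⟩
    ext i; fin_cases i <;> simp [vec, doubleLine, webVec, mulLin]

lemma isRealPair_vec_iff (r : WebPoint F) :
    IsRealPair (vec r) ↔ disc (vec r) = 0 ∧ r ≠ doubleLine := by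
  constructor
  · intro h
    refine ⟨?_, ?_⟩
    · obtain ⟨l₁, l₂, -, -, hl⟩ := h
      rw [hl, disc_mulLin]
    · rintro rfl
      exact not_isRealPair_webVec_sq one_ne_zero h
  · rintro ⟨hdisc, hr⟩
    rcases r with ⟨p₂, p₄, p₅⟩ | ⟨p₄, p₅⟩ | p₅ | u
    case inr.inr.inr => exact absurd rfl hr
    all_goals exact isRealPair_webVec hdisc (by simp)

lemma not_isImagPair_vec (r : WebPoint F) : ¬ IsImagPair (vec r) := by
  obtain ⟨x₁, x₂, x₄, x₅, hr⟩ := exists_vec_eq_webVec r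
  exact hr ▸ not_isImagPair_webVec

lemma card_isDoubleLine : Nat.card {r : WebPoint F // IsDoubleLine (vec r)} = 1 := by
  simp only [isDoubleLine_vec_iff, Nat.card_unique]

lemma card_isImagPair : Nat.card {r : WebPoint F // IsImagPair (vec r)} = 0 := by
  simp [not_isImagPair_vec]

variable [Fintype F]

lemma card_disc_vec_eq_zero :
    Nat.card {r : WebPoint F // disc (vec r) = 0} = Fintype.card F ^ 2 + Fintype.card F + 1 := by
  classical
  rw [Nat.card_eq_fintype_card, Fintype.card_subtype, Finset.card_filter]
  simp only [Fintype.sum_sum_type, Fintype.sum_prod_type, vec, disc_webVec, one_mul, mul_one,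
    one_pow, mul_zero, zero_mul, sub_eq_zero, Finset.sum_ite_eq, Finset.mem_univ, if_true]
  simp [sq, add_assoc]

lemma card_isRealPair :
    Nat.card {r : WebPoint F // IsRealPair (vec r)} = Fintype.card F ^ 2 + Fintype.card F := by
  classical
  have hd : disc (vec (doubleLine : WebPoint F)) = 0 := by simp [vec, doubleLine, disc_webVec]
  simp only [isRealPair_vec_iff]
  rw [Nat.card_eq_fintype_card, Fintype.card_subtype, ← Finset.filter_filter, Finset.filter_ne',
    Finset.card_erase_of_mem (by simpa using hd), ← Fintype.card_subtype,
    ← Nat.card_eq_fintype_card, card_disc_vec_eq_zero, Nat.add_sub_cancel]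

lemma card_isNonsingular :
    Nat.card {r : WebPoint F // IsNonsingular (vec r)} = Fintype.card F ^ 3 := by
  classical
  have hcard : Fintype.card (WebPoint F) =
      Fintype.card F ^ 3 + (Fintype.card F ^ 2 + Fintype.card F + 1) := by
    simp only [Fintype.card_sum, Fintype.card_prod, Fintype.card_unique]; ring
  simp only [IsNonsingular, ne_eq]
  rw [Nat.card_eq_fintype_card, Fintype.card_subtype_compl, hcard,
    ← Nat.card_eq_fintype_card (α := {r : WebPoint F // disc (vec r) = 0}), card_disc_vec_eq_zero,
    Nat.add_sub_cancel]

end WebPoint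

lemma numConics_web_eq_card {F : Type} [Field F] (T : (Fin 6 → F) → Prop)
    (hT : ∀ c : F, c ≠ 0 → ∀ a, T a → T (c • a)) :
    numConics (web F) T = Nat.card {r : WebPoint F // T (WebPoint.vec r)} :=
  numConics_eq_card _ T _ WebPoint.vec_ne_zero WebPoint.vec_mem_web
    (fun _ _ _ ↦ WebPoint.eq_of_smul_vec_eq_vec) (fun _ ↦ WebPoint.exists_smul_vec_of_mem_web) hT

/-- conic counts of the web `(X0X1, X0X2 - X1^2, X1X2, X2^2)`
(line-orbit `o_9`). -/
theorem web_o9_conic_counts (F : Type) [Field F] [Fintype F] (q : ℕ)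
    (hq : Fintype.card F = q) (W : Submodule F (Fin 6 → F))
    (hW : W = Submodule.span F ({![0, 1, 0, 0, 0, 0], ![0, 0, 1, -1, 0, 0],
      ![0, 0, 0, 0, 1, 0], ![0, 0, 0, 0, 0, 1]} : Set (Fin 6 → F))) :
    numConics W IsDoubleLine = 1 ∧
    numConics W IsRealPair = q ^ 2 + q ∧
    numConics W IsImagPair = 0 ∧
    numConics W IsNonsingular = q ^ 3 := by
  obtain rfl : W = web F := hW
  subst hq
  refine ⟨?_, ?_, ?_, ?_⟩ <;> rw [numConics_web_eq_card _ fun _ hc _ h ↦ h.smul hc]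
  exacts [WebPoint.card_isDoubleLine, WebPoint.card_isRealPair, WebPoint.card_isImagPair,
    WebPoint.card_isNonsingular]

end Conics
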